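/- arXiv:2405.16252 — 7 statements merged into one kernel-verified Lean document; each statement's English description precedes it below -/
import Mathlib

section
/- Let τ, ν ∈ ℤ and let g, s : ℤ → ℤ be sequences such that: (i) g(n+1) = g(n) − 1 for every n < 2τ and g(n+1) = g(n) + 1 for every n ≥ 2τ; (ii) either (V) there is C ∈ ℤ with s(n) = C + |n − ν| for all n and ν ∈ {2τ − 1, 2τ + 1}, or (W) ν = τ = 0 and there is C ∈ ℤ with s(n) = C + |n| for all n ≠ 0 and s(0) = C + 2; (iii) g(n) ≥ s(n) for every n ≠ 0; (iv) g(1) ≥ s(1) + 2. If there exists an integer n₀ > 0 with g(n₀) = s(n₀), then alternative (V) holds, ν = 2τ − 1, 0 < ν < n₀, and moreover g(m) = s(m) for every m ≥ 2τ while g(m) = s(m) + 2 for every m ≤ 2τ − 1. -/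
/-!
Both sequences are V-shaped: `g n = G + |n - 2τ|` with `G = g (2τ)`, and in case (V)
`s n = C + |n - ν|` with `|ν - 2τ| = 1`. Comparing them at `1` and at `n₀` through the triangle
inequality gives `C + 1 ≤ G` and `G ≤ C + 1`. Equality in both forces `ν` below `2τ ≤ n₀` and
above `1`, so `ν = 2τ - 1 > 0`, after which `g - s` is read off from the two absolute values.
In case (W) the comparison at `1` gives `C + 2 ≤ G`, which contradicts `g n₀ = s n₀`.
-/

theorem apply_eq_apply_add_abs_sub {f : ℤ → ℤ} {c : ℤ}
    (hdown : ∀ n < c, f (n + 1) = f n - 1) (hup : ∀ n, c ≤ n → f (n + 1) = f n + 1) (n : ℤ) :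
    f n = f c + |n - c| := by
  rcases le_total c n with hcn | hnc
  · rw [abs_of_nonneg (sub_nonneg.2 hcn)]
    induction n, hcn using Int.leInduction with
    | base => simp
    | succ n hcn ih => rw [hup n hcn, ih]; ring
  · rw [abs_of_nonpos (sub_nonpos.2 hnc)]
    induction n, hnc using Int.leInductionDown with
    | base => simp
    | pred n hnc ih =>
      have hstep := hdown (n - 1) (by omega)
      rw [sub_add_cancel] at hstep
      linarith

theorem eq_add_one_and_eq_sub_one_of_abs_comparison {c ν G C n₀ : ℤ}
    (hν : ν = c - 1 ∨ ν = c + 1)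
    (h1 : C + |1 - ν| + 2 ≤ G + |1 - c|) (hn₀pos : 0 < n₀) (hn₀ : G + |n₀ - c| = C + |n₀ - ν|) :
    G = C + 1 ∧ ν = c - 1 ∧ 0 < ν ∧ ν < n₀ := by
  have hνc : |c - ν| = 1 := by rcases hν with rfl | rfl <;> norm_num
  have hlow : |1 - c| - |1 - ν| ≤ 1 := by
    simpa [abs_sub_comm ν, hνc] using abs_sub_abs_le_abs_sub (1 - c) (1 - ν)
  have hhigh : |n₀ - ν| - |n₀ - c| ≤ 1 := by
    simpa [hνc] using abs_sub_abs_le_abs_sub (n₀ - ν) (n₀ - c)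
  have hG : G = C + 1 := by linarith
  -- Both triangle inequalities are now equalities: `n₀` lies beyond `c` and `1` beyond `ν`.
  rcases hν with rfl | rfl <;> grind

theorem stmt3_general (τ ν : ℤ) (g s : ℤ → ℤ)
    (hg₁ : ∀ n : ℤ, n < 2 * τ → g (n + 1) = g n - 1)
    (hg₂ : ∀ n : ℤ, 2 * τ ≤ n → g (n + 1) = g n + 1)
    (hVW :
      (∃ C : ℤ, (∀ n : ℤ, s n = C + |n - ν|) ∧ (ν = 2 * τ - 1 ∨ ν = 2 * τ + 1)) ∨
      (ν = 0 ∧ τ = 0 ∧ ∃ C : ℤ, (∀ n : ℤ, n ≠ 0 → s n = C + |n|) ∧ s 0 = C + 2))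
    (h1 : s 1 + 2 ≤ g 1)
    (n₀ : ℤ) (hn₀pos : 0 < n₀) (hn₀ : g n₀ = s n₀) :
    (∃ C : ℤ, ∀ n : ℤ, s n = C + |n - ν|) ∧
    ν = 2 * τ - 1 ∧ 0 < ν ∧ ν < n₀ ∧
    (∀ m : ℤ, 2 * τ ≤ m → g m = s m) ∧
    (∀ m : ℤ, m ≤ 2 * τ - 1 → g m = s m + 2) := by
  have hg := apply_eq_apply_add_abs_sub hg₁ hg₂
  rcases hVW with ⟨C, hs, hν⟩ | ⟨rfl, rfl, C, hs, -⟩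
  · rw [hg, hs] at h1 hn₀
    obtain ⟨hG, rfl, hνpos, hνn₀⟩ := eq_add_one_and_eq_sub_one_of_abs_comparison hν h1 hn₀pos hn₀
    refine ⟨⟨C, hs⟩, rfl, hνpos, hνn₀, fun m hm ↦ ?_, fun m hm ↦ ?_⟩ <;>
      rw [hg, hs, hG] <;> grind
  · rw [hg, hs 1 one_ne_zero] at h1
    rw [hg, hs n₀ hn₀pos.ne'] at hn₀
    grind

/-- Let `τ ν : ℤ` and `g s : ℤ → ℤ` such that: (i) `g` is unimodal with
slopes `∓1` and vertex `2τ`; (ii) either (V) `s n = C + |n - ν|` for some `C` with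
`ν ∈ {2τ - 1, 2τ + 1}`, or (W) `ν = τ = 0` and `s n = C + |n|` for `n ≠ 0` while
`s 0 = C + 2`; (iii) `g n ≥ s n` for every `n ≠ 0`; (iv) `g 1 ≥ s 1 + 2`.  If there is an
integer `n₀ > 0` with `g n₀ = s n₀`, then alternative (V) holds, `ν = 2τ - 1`,
`0 < ν < n₀`, and moreover `g m = s m` for every `m ≥ 2τ` while `g m = s m + 2` for every
`m ≤ 2τ - 1`. -/
theorem stmt3 (τ ν : ℤ) (g s : ℤ → ℤ)
    (hg₁ : ∀ n : ℤ, n < 2 * τ → g (n + 1) = g n - 1)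
    (hg₂ : ∀ n : ℤ, 2 * τ ≤ n → g (n + 1) = g n + 1)
    (hVW :
      (∃ C : ℤ, (∀ n : ℤ, s n = C + |n - ν|) ∧ (ν = 2 * τ - 1 ∨ ν = 2 * τ + 1)) ∨
      (ν = 0 ∧ τ = 0 ∧ ∃ C : ℤ, (∀ n : ℤ, n ≠ 0 → s n = C + |n|) ∧ s 0 = C + 2))
    (hge : ∀ n : ℤ, n ≠ 0 → s n ≤ g n)
    (h1 : s 1 + 2 ≤ g 1)
    (n₀ : ℤ) (hn₀pos : 0 < n₀) (hn₀ : g n₀ = s n₀) :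
    (∃ C : ℤ, ∀ n : ℤ, s n = C + |n - ν|) ∧
    ν = 2 * τ - 1 ∧ 0 < ν ∧ ν < n₀ ∧
    (∀ m : ℤ, 2 * τ ≤ m → g m = s m) ∧
    (∀ m : ℤ, m ≤ 2 * τ - 1 → g m = s m + 2) :=
  stmt3_general τ ν g s hg₁ hg₂ hVW h1 n₀ hn₀pos hn₀
end

section
/- Under hypotheses (P1)–(P10) of the given setting: a(ν₊ − 1) = a(ν₊) + 1 and a(ν₋ + 1) = a(ν₋) + 1; consequently ν₊ ≠ ν₋ + 1, so either ν₊ = ν₋ or ν₊ ≥ ν₋ + 2. -/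
/-! Consecutive values of `a` differ by at most one (through `b`, which agrees with `a` at odd
arguments) and have opposite parities, so `a` moves by exactly `±1` at every step. Minimality
of `ν₊` forbids an upward step from `ν₊ - 1`, maximality of `ν₋` forbids a downward step from
`ν₋ + 1`; at `ν₊ = ν₋ + 1` these would say that the same step goes both ways. -/

section IntSequence

variable (a : ℤ → ℕ)

theorem abs_sub_succ_le_one_of_interlaced (b : ℤ → ℕ) (hodd : ∀ n : ℤ, Odd n → a n = b n)
    (hclose : ∀ n : ℤ, |(a (n + 1) : ℤ) - b n| ≤ 1 ∧ |(b (n + 1) : ℤ) - a n| ≤ 1) (m : ℤ) :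
    |(a (m + 1) : ℤ) - a m| ≤ 1 := by
  rcases Int.even_or_odd m with hm | hm
  · rw [hodd (m + 1) hm.add_one]
    exact (hclose m).2
  · rw [hodd m hm]
    exact (hclose m).1

variable {a}

theorem succ_or_pred_of_abs_sub_le_one (hpar : ∀ n : ℤ, (a n : ℤ) ≡ n [ZMOD 2]) {m : ℤ}
    (hm : |(a (m + 1) : ℤ) - a m| ≤ 1) : a (m + 1) = a m + 1 ∨ a m = a (m + 1) + 1 := by
  have h₁ := hpar (m + 1)
  have h₀ := hpar m
  rw [Int.ModEq] at h₁ h₀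
  rw [abs_le] at hm
  omega

theorem ne_succ_of_isLeast {ν : ℤ}
    (hν : IsLeast {n : ℤ | ∀ k : ℤ, n ≤ k → a (k + 1) = a k + 1} ν) :
    a ν ≠ a (ν - 1) + 1 := by
  intro h
  have hmem : ν - 1 ∈ {n : ℤ | ∀ k : ℤ, n ≤ k → a (k + 1) = a k + 1} := by
    intro k hk
    rcases hk.eq_or_lt with rfl | hk
    · simpa using h
    · exact hν.1 k (by omega)
  have := hν.2 hmem
  omega

theorem ne_pred_of_isGreatest {ν : ℤ}
    (hν : IsGreatest {n : ℤ | ∀ k : ℤ, k ≤ n → a (k - 1) = a k + 1} ν) :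
    a ν ≠ a (ν + 1) + 1 := by
  intro h
  have hmem : ν + 1 ∈ {n : ℤ | ∀ k : ℤ, k ≤ n → a (k - 1) = a k + 1} := by
    intro k hk
    rcases hk.eq_or_lt with rfl | hk
    · simpa using h
    · exact hν.1 k (by omega)
  have := hν.2 hmem
  omega

theorem le_of_isGreatest_of_isLeast {νp νm : ℤ}
    (hνp : IsLeast {n : ℤ | ∀ k : ℤ, n ≤ k → a (k + 1) = a k + 1} νp)
    (hνm : IsGreatest {n : ℤ | ∀ k : ℤ, k ≤ n → a (k - 1) = a k + 1} νm) :
    νm ≤ νp := by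
  by_contra! hlt
  have hup := hνp.1 νp le_rfl
  have hdown := hνm.1 (νp + 1) (by omega)
  rw [add_sub_cancel_right] at hdown
  omega

end IntSequence

theorem stmt5_general (a b : ℤ → ℕ)
    (P1 : ∀ n : ℤ, Odd n → a n = b n)
    (P4 : ∀ n : ℤ, |(a (n + 1) : ℤ) - b n| ≤ 1 ∧ |(b (n + 1) : ℤ) - a n| ≤ 1)
    (P10 : ∀ n : ℤ, (a n : ℤ) ≡ n [ZMOD 2] ∧ (b n : ℤ) ≡ n [ZMOD 2])
    (νp νm : ℤ)
    (hνp : IsLeast {n : ℤ | ∀ k : ℤ, n ≤ k → a (k + 1) = a k + 1} νp)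
    (hνm : IsGreatest {n : ℤ | ∀ k : ℤ, k ≤ n → a (k - 1) = a k + 1} νm) :
    a (νp - 1) = a νp + 1 ∧ a (νm + 1) = a νm + 1 ∧
    νp ≠ νm + 1 ∧ (νp = νm ∨ νm + 2 ≤ νp) := by
  have step : ∀ m : ℤ, a (m + 1) = a m + 1 ∨ a m = a (m + 1) + 1 := fun m =>
    succ_or_pred_of_abs_sub_le_one (fun n => (P10 n).1)
      (abs_sub_succ_le_one_of_interlaced a b P1 P4 m)
  have down_at_νp : a (νp - 1) = a νp + 1 := by
    have := step (νp - 1)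
    rw [sub_add_cancel] at this
    exact this.resolve_left (ne_succ_of_isLeast hνp)
  have up_at_νm : a (νm + 1) = a νm + 1 := (step νm).resolve_right (ne_pred_of_isGreatest hνm)
  have hne : νp ≠ νm + 1 := by
    rintro rfl
    rw [add_sub_cancel_right] at down_at_νp
    omega
  have hle := le_of_isGreatest_of_isLeast hνp hνm
  exact ⟨down_at_νp, up_at_νm, hne, by omega⟩

/-- Under hypotheses (P1)–(P10) on the sequences `a b : ℤ → ℕ`, with
`ν₊` the least element of `{n | a (k+1) = a k + 1 for all k ≥ n}` and `ν₋` the greatest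
element of `{n | a (k-1) = a k + 1 for all k ≤ n}`: one has `a (ν₊ - 1) = a ν₊ + 1` and
`a (ν₋ + 1) = a ν₋ + 1`; consequently `ν₊ ≠ ν₋ + 1`, so either `ν₊ = ν₋` or
`ν₊ ≥ ν₋ + 2`. -/
theorem stmt5 (a b : ℤ → ℕ)
    (P1 : ∀ n : ℤ, Odd n → a n = b n)
    (P2 : ∀ n : ℤ, Even n → (b n : ℤ) - a n ∈ ({-2, 0, 2} : Set ℤ))
    (P3 : ∀ n : ℤ, Even n → b n ≠ a n → a (n - 1) = a (n + 1))
    (P4 : ∀ n : ℤ, |(a (n + 1) : ℤ) - b n| ≤ 1 ∧ |(b (n + 1) : ℤ) - a n| ≤ 1)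
    (P5 : ∀ n : ℤ, Odd n → a n = b (n + 1) + 1 → a (n - 1) = a n + 1)
    (P6 : ∀ n : ℤ, Odd n → a n = a (n + 1) + 1 → b (n - 1) = a n + 1)
    (P7 : ∀ n : ℤ, Even n → b n = a (n + 1) + 1 → a (n - 1) = a n + 1)
    (P8 : ∀ n : ℤ, Even n → a n = a (n + 1) + 1 → a (n - 1) = b n + 1)
    (P9 : ∃ Np Nm : ℤ, (∀ n : ℤ, Np ≤ n → a (n + 1) = a n + 1) ∧
        (∀ n : ℤ, n ≤ Nm → a (n - 1) = a n + 1))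
    (P10 : ∀ n : ℤ, (a n : ℤ) ≡ n [ZMOD 2] ∧ (b n : ℤ) ≡ n [ZMOD 2])
    (νp νm : ℤ)
    (hνp : IsLeast {n : ℤ | ∀ k : ℤ, n ≤ k → a (k + 1) = a k + 1} νp)
    (hνm : IsGreatest {n : ℤ | ∀ k : ℤ, k ≤ n → a (k - 1) = a k + 1} νm) :
    a (νp - 1) = a νp + 1 ∧ a (νm + 1) = a νm + 1 ∧
    νp ≠ νm + 1 ∧ (νp = νm ∨ νm + 2 ≤ νp) :=
  stmt5_general a b P1 P4 P10 νp νm hνp hνm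
end

section
/- Under hypotheses (P1)–(P10) of the given setting, suppose ν₊ = ν₋ and write m = ν₊. Then the sequence a is V-shaped with vertex m, i.e. a(n) = a(m) + |n − m| for every n; b(n) = a(n) for every n ≠ m; if m is odd then also b(m) = a(m), while if m is even then b(m) ∈ {a(m), a(m) + 2}. -/
/-! Since `ν₊ = ν₋ = m`, the sequence `a` climbs by one at every step to the right of `m` and
at every step to the left of `m`, so it is the V with vertex `m`. Away from the vertex the
neighbours `a (n - 1)` and `a (n + 1)` of an even `n` differ by two, so (P3) forces `b n = a n`;
at an even vertex, (P4) gives `b m ≥ a (m + 1) - 1 = a m`, which leaves only `0` and `2` among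
the differences allowed by (P2). -/

section VShape

variable (a : ℤ → ℕ) {m : ℤ}

theorem apply_eq_add_natAbs_sub_of_le (hup : ∀ k, m ≤ k → a (k + 1) = a k + 1)
    {n : ℤ} (hmn : m ≤ n) : a n = a m + (n - m).natAbs := by
  induction n, hmn using Int.leInduction with
  | base => simp
  | succ n hmn ih => rw [hup n hmn, ih]; omega

theorem apply_eq_add_natAbs_sub_of_ge (hdown : ∀ k, k ≤ m → a (k - 1) = a k + 1)
    {n : ℤ} (hnm : n ≤ m) : a n = a m + (n - m).natAbs := by
  induction n, hnm using Int.leInductionDown with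
  | base => simp
  | pred n hnm ih => rw [hdown n hnm, ih]; omega

theorem apply_eq_add_natAbs_sub (hup : ∀ k, m ≤ k → a (k + 1) = a k + 1)
    (hdown : ∀ k, k ≤ m → a (k - 1) = a k + 1) (n : ℤ) : a n = a m + (n - m).natAbs :=
  (le_total m n).elim (apply_eq_add_natAbs_sub_of_le a hup) (apply_eq_add_natAbs_sub_of_ge a hdown)

theorem apply_sub_one_ne_apply_add_one_of_ne (hV : ∀ n, a n = a m + (n - m).natAbs)
    {n : ℤ} (hn : n ≠ m) : a (n - 1) ≠ a (n + 1) := by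
  rw [hV (n - 1), hV (n + 1)]
  omega

end VShape

theorem stmt6_general (a b : ℤ → ℕ)
    (P1 : ∀ n : ℤ, Odd n → a n = b n)
    (P2 : ∀ n : ℤ, Even n → (b n : ℤ) - a n ∈ ({-2, 0, 2} : Set ℤ))
    (P3 : ∀ n : ℤ, Even n → b n ≠ a n → a (n - 1) = a (n + 1))
    (P4 : ∀ n : ℤ, |(a (n + 1) : ℤ) - b n| ≤ 1 ∧ |(b (n + 1) : ℤ) - a n| ≤ 1)
    (νp νm : ℤ)
    (hνp : IsLeast {n : ℤ | ∀ k : ℤ, n ≤ k → a (k + 1) = a k + 1} νp)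
    (hνm : IsGreatest {n : ℤ | ∀ k : ℤ, k ≤ n → a (k - 1) = a k + 1} νm)
    (heq : νp = νm) :
    (∀ n : ℤ, a n = a νp + (n - νp).natAbs) ∧
    (∀ n : ℤ, n ≠ νp → b n = a n) ∧
    (Odd νp → b νp = a νp) ∧
    (Even νp → b νp = a νp ∨ b νp = a νp + 2) := by
  subst heq
  have hV := apply_eq_add_natAbs_sub a hνp.1 hνm.1
  refine ⟨hV, fun n hn => ?_, fun hodd => (P1 νp hodd).symm, fun heven => ?_⟩
  · rcases Int.even_or_odd n with heven | hodd
    · by_contra hne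
      exact apply_sub_one_ne_apply_add_one_of_ne a hV hn (P3 n heven hne)
    · exact (P1 n hodd).symm
  · have hdiff := P2 νp heven
    simp only [Set.mem_insert_iff, Set.mem_singleton_iff] at hdiff
    have hnear := abs_le.mp (P4 νp).1
    have hsucc := hV (νp + 1)
    omega

/-- Under hypotheses (P1)–(P10) on `a b : ℤ → ℕ`, suppose `ν₊ = ν₋` and
write `m = ν₊`.  Then `a` is V-shaped with vertex `m`, i.e. `a n = a m + |n - m|` for
every `n`; `b n = a n` for every `n ≠ m`; if `m` is odd then also `b m = a m`, while if
`m` is even then `b m ∈ {a m, a m + 2}`. -/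
theorem stmt6 (a b : ℤ → ℕ)
    (P1 : ∀ n : ℤ, Odd n → a n = b n)
    (P2 : ∀ n : ℤ, Even n → (b n : ℤ) - a n ∈ ({-2, 0, 2} : Set ℤ))
    (P3 : ∀ n : ℤ, Even n → b n ≠ a n → a (n - 1) = a (n + 1))
    (P4 : ∀ n : ℤ, |(a (n + 1) : ℤ) - b n| ≤ 1 ∧ |(b (n + 1) : ℤ) - a n| ≤ 1)
    (P5 : ∀ n : ℤ, Odd n → a n = b (n + 1) + 1 → a (n - 1) = a n + 1)
    (P6 : ∀ n : ℤ, Odd n → a n = a (n + 1) + 1 → b (n - 1) = a n + 1)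
    (P7 : ∀ n : ℤ, Even n → b n = a (n + 1) + 1 → a (n - 1) = a n + 1)
    (P8 : ∀ n : ℤ, Even n → a n = a (n + 1) + 1 → a (n - 1) = b n + 1)
    (P9 : ∃ Np Nm : ℤ, (∀ n : ℤ, Np ≤ n → a (n + 1) = a n + 1) ∧
        (∀ n : ℤ, n ≤ Nm → a (n - 1) = a n + 1))
    (P10 : ∀ n : ℤ, (a n : ℤ) ≡ n [ZMOD 2] ∧ (b n : ℤ) ≡ n [ZMOD 2])
    (νp νm : ℤ)
    (hνp : IsLeast {n : ℤ | ∀ k : ℤ, n ≤ k → a (k + 1) = a k + 1} νp)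
    (hνm : IsGreatest {n : ℤ | ∀ k : ℤ, k ≤ n → a (k - 1) = a k + 1} νm)
    (heq : νp = νm) :
    (∀ n : ℤ, a n = a νp + (n - νp).natAbs) ∧
    (∀ n : ℤ, n ≠ νp → b n = a n) ∧
    (Odd νp → b νp = a νp) ∧
    (Even νp → b νp = a νp ∨ b νp = a νp + 2) :=
  stmt6_general a b P1 P2 P3 P4 νp νm hνp hνm heq
end

section
/- Under hypotheses (P1)–(P10) of the given setting, suppose ν₊ = ν₋ + 2 and write m = ν₋ + 1. Then a(ν₋) = a(ν₊), a(m) = a(ν₊) + 1, a(n) = a(ν₊) + (n − ν₊) for every n ≥ ν₊, and a(n) = a(ν₋) + (ν₋ − n) for every n ≤ ν₋ (so a is W-shaped). Moreover: if m is even then b(m) = a(m) − 2 and b(n) = a(n) for every n ≠ m; if m is odd then b(m − 1) = a(m − 1) + 2, b(m + 1) = a(m + 1) + 2, and b(n) = a(n) for every n ∉ {m − 1, m + 1}. -/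
/-!
Parity (P10) together with (P1) and (P4) forces `|a (n + 1) - a n| = 1` for every `n`, so the
extremality of `ν₊` and `ν₋` turns `m` into a peak: `a (m - 1) + 1 = a m = a (m + 1) + 1`, while
`a` is strictly monotone on either side of `[ν₋, ν₊]`. Wherever `a (n - 1) ≠ a (n + 1)`, (P3)
gives `b n = a n`; at the peak, (P8) (for even `m`) resp. (P6) and (P5) with parity (for odd `m`)
pin down the remaining values of `b`.
-/

theorem eq_add_one_or_eq_add_one_of_abs_sub_le_one {x y : ℕ} (h : |(x : ℤ) - y| ≤ 1)
    (hxy : (x : ℤ) ≡ y + 1 [ZMOD 2]) : x = y + 1 ∨ y = x + 1 := by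
  rw [abs_le] at h
  unfold Int.ModEq at hxy
  omega

theorem eq_add_natAbs_of_forall_le {f : ℤ → ℕ} {ν : ℤ} (hf : ∀ k, ν ≤ k → f (k + 1) = f k + 1)
    {n : ℤ} (hn : ν ≤ n) : f n = f ν + (n - ν).natAbs := by
  induction n, hn using Int.leInduction with
  | base => simp
  | succ k hk ih => have := hf k hk; omega

theorem eq_add_natAbs_of_forall_ge {f : ℤ → ℕ} {ν : ℤ} (hf : ∀ k, k ≤ ν → f (k - 1) = f k + 1)
    {n : ℤ} (hn : n ≤ ν) : f n = f ν + (ν - n).natAbs := by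
  induction n, hn using Int.leInductionDown with
  | base => simp
  | pred k hk ih => have := hf k hk; omega

theorem ne_pred_add_one_of_isLeast {f : ℤ → ℕ} {ν : ℤ}
    (h : IsLeast {n | ∀ k, n ≤ k → f (k + 1) = f k + 1} ν) : f ν ≠ f (ν - 1) + 1 := by
  intro hν
  have : ν - 1 ∈ {n | ∀ k, n ≤ k → f (k + 1) = f k + 1} := by
    intro k hk
    rcases hk.eq_or_lt with rfl | hk
    · simpa using hν
    · exact h.1 k (by omega)
  linarith [h.2 this]

theorem ne_succ_add_one_of_isGreatest {f : ℤ → ℕ} {ν : ℤ}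
    (h : IsGreatest {n | ∀ k, k ≤ n → f (k - 1) = f k + 1} ν) : f ν ≠ f (ν + 1) + 1 := by
  intro hν
  have : ν + 1 ∈ {n | ∀ k, k ≤ n → f (k - 1) = f k + 1} := by
    intro k hk
    rcases hk.eq_or_lt with rfl | hk
    · simpa using hν
    · exact h.1 k (by omega)
  linarith [h.2 this]

section Sequences

variable {a b : ℤ → ℕ}

theorem succ_eq_add_one_or_eq_succ_add_one (P1 : ∀ n : ℤ, Odd n → a n = b n)
    (P4 : ∀ n : ℤ, |(a (n + 1) : ℤ) - b n| ≤ 1 ∧ |(b (n + 1) : ℤ) - a n| ≤ 1)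
    (ha : ∀ n : ℤ, (a n : ℤ) ≡ n [ZMOD 2]) (n : ℤ) :
    a (n + 1) = a n + 1 ∨ a n = a (n + 1) + 1 := by
  have hle : |(a (n + 1) : ℤ) - a n| ≤ 1 := by
    rcases Int.even_or_odd n with hn | hn
    · simpa [P1 (n + 1) hn.add_one] using (P4 n).2
    · simpa [P1 n hn] using (P4 n).1
  exact eq_add_one_or_eq_add_one_of_abs_sub_le_one hle
    ((ha (n + 1)).trans ((ha n).add_right 1).symm)

theorem eq_of_apply_sub_one_ne_apply_add_one (P1 : ∀ n : ℤ, Odd n → a n = b n)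
    (P3 : ∀ n : ℤ, Even n → b n ≠ a n → a (n - 1) = a (n + 1)) {n : ℤ}
    (hn : a (n - 1) ≠ a (n + 1)) : b n = a n := by
  rcases Int.even_or_odd n with he | ho
  · by_contra hne
    exact hn (P3 n he hne)
  · exact (P1 n ho).symm

theorem eq_of_odd_or_outside_Icc (P1 : ∀ n : ℤ, Odd n → a n = b n)
    (P3 : ∀ n : ℤ, Even n → b n ≠ a n → a (n - 1) = a (n + 1)) {νm νp : ℤ}
    (hm : ∀ k, k ≤ νm → a (k - 1) = a k + 1) (hp : ∀ k, νp ≤ k → a (k + 1) = a k + 1) {n : ℤ}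
    (hn : Odd n ∨ n < νm ∨ νp < n) : b n = a n := by
  rcases hn with ho | hlt | hgt
  · exact (P1 n ho).symm
  · refine eq_of_apply_sub_one_ne_apply_add_one P1 P3 ?_
    have h₁ := hm n (by omega)
    have h₂ := hm (n + 1) (by omega)
    simp only [add_sub_cancel_right] at h₂
    omega
  · refine eq_of_apply_sub_one_ne_apply_add_one P1 P3 ?_
    have h₁ := hp n (by omega)
    have h₂ := hp (n - 1) (by omega)
    simp only [sub_add_cancel] at h₂
    omega

section Peak

variable {m : ℤ}

theorem add_two_eq_of_even_of_peak
    (P8 : ∀ n : ℤ, Even n → a n = a (n + 1) + 1 → a (n - 1) = b n + 1) (hm : Even m)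
    (hdown : a m = a (m + 1) + 1) (hup : a m = a (m - 1) + 1) :
    b m + 2 = a m := by
  have := P8 m hm hdown
  omega

theorem pred_eq_add_two_of_odd_of_peak
    (P6 : ∀ n : ℤ, Odd n → a n = a (n + 1) + 1 → b (n - 1) = a n + 1) (hm : Odd m)
    (hdown : a m = a (m + 1) + 1) (hup : a m = a (m - 1) + 1) :
    b (m - 1) = a (m - 1) + 2 := by
  have := P6 m hm hdown
  omega

theorem succ_eq_add_two_of_odd_of_peak
    (P4 : ∀ n : ℤ, |(a (n + 1) : ℤ) - b n| ≤ 1 ∧ |(b (n + 1) : ℤ) - a n| ≤ 1)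
    (P5 : ∀ n : ℤ, Odd n → a n = b (n + 1) + 1 → a (n - 1) = a n + 1)
    (P10 : ∀ n : ℤ, (a n : ℤ) ≡ n [ZMOD 2] ∧ (b n : ℤ) ≡ n [ZMOD 2]) (hm : Odd m)
    (hdown : a m = a (m + 1) + 1) (hup : a m = a (m - 1) + 1) :
    b (m + 1) = a (m + 1) + 2 := by
  have hpar : (b (m + 1) : ℤ) ≡ a m + 1 [ZMOD 2] :=
    (P10 (m + 1)).2.trans (((P10 m).1.add_right 1).symm)
  rcases eq_add_one_or_eq_add_one_of_abs_sub_le_one (P4 m).2 hpar with h | h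
  · omega
  · have := P5 m hm h
    omega

end Peak

end Sequences

theorem stmt7_general (a b : ℤ → ℕ)
    (P1 : ∀ n : ℤ, Odd n → a n = b n)
    (P3 : ∀ n : ℤ, Even n → b n ≠ a n → a (n - 1) = a (n + 1))
    (P4 : ∀ n : ℤ, |(a (n + 1) : ℤ) - b n| ≤ 1 ∧ |(b (n + 1) : ℤ) - a n| ≤ 1)
    (P5 : ∀ n : ℤ, Odd n → a n = b (n + 1) + 1 → a (n - 1) = a n + 1)
    (P6 : ∀ n : ℤ, Odd n → a n = a (n + 1) + 1 → b (n - 1) = a n + 1)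
    (P8 : ∀ n : ℤ, Even n → a n = a (n + 1) + 1 → a (n - 1) = b n + 1)
    (P10 : ∀ n : ℤ, (a n : ℤ) ≡ n [ZMOD 2] ∧ (b n : ℤ) ≡ n [ZMOD 2])
    (νp νm : ℤ)
    (hνp : IsLeast {n : ℤ | ∀ k : ℤ, n ≤ k → a (k + 1) = a k + 1} νp)
    (hνm : IsGreatest {n : ℤ | ∀ k : ℤ, k ≤ n → a (k - 1) = a k + 1} νm)
    (heq : νp = νm + 2) :
    a νm = a νp ∧
    a (νm + 1) = a νp + 1 ∧
    (∀ n : ℤ, νp ≤ n → a n = a νp + (n - νp).natAbs) ∧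
    (∀ n : ℤ, n ≤ νm → a n = a νm + (νm - n).natAbs) ∧
    (Even (νm + 1) →
      b (νm + 1) + 2 = a (νm + 1) ∧ ∀ n : ℤ, n ≠ νm + 1 → b n = a n) ∧
    (Odd (νm + 1) →
      b νm = a νm + 2 ∧ b (νm + 2) = a (νm + 2) + 2 ∧
      ∀ n : ℤ, n ≠ νm → n ≠ νm + 2 → b n = a n) := by
  subst heq
  have step := succ_eq_add_one_or_eq_succ_add_one P1 P4 (fun n ↦ (P10 n).1)
  have e₁ : νm + 1 - 1 = νm := by ring
  have e₂ : νm + 1 + 1 = νm + 2 := by ring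
  have hup : a (νm + 1) = a (νm + 1 - 1) + 1 := by
    rw [e₁]
    exact (step νm).resolve_right (ne_succ_add_one_of_isGreatest hνm)
  have hdown : a (νm + 1) = a (νm + 1 + 1) + 1 := by
    have := ne_pred_add_one_of_isLeast hνp
    rw [show νm + 2 - 1 = νm + 1 by ring, ← e₂] at this
    exact (step (νm + 1)).resolve_left this
  have off_peak : ∀ n, Odd n ∨ n < νm ∨ νm + 2 < n → b n = a n :=
    fun _ ↦ eq_of_odd_or_outside_Icc P1 P3 hνm.1 hνp.1
  refine ⟨by rw [e₁] at hup; rw [e₂] at hdown; omega, e₂ ▸ hdown,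
    fun n hn ↦ eq_add_natAbs_of_forall_le hνp.1 hn, fun n hn ↦ eq_add_natAbs_of_forall_ge hνm.1 hn, fun hm ↦ ⟨?_, fun n hn ↦ off_peak n ?_⟩,
    fun hm ↦ ⟨?_, ?_, fun n hn₁ hn₂ ↦ off_peak n ?_⟩⟩
  · exact add_two_eq_of_even_of_peak P8 hm hdown hup
  · rw [Int.odd_iff]; have := Int.even_iff.mp hm; omega
  · simpa only [e₁] using pred_eq_add_two_of_odd_of_peak P6 hm hdown hup
  · simpa only [e₂] using succ_eq_add_two_of_odd_of_peak P4 P5 P10 hm hdown hup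
  · rw [Int.odd_iff]; have := Int.odd_iff.mp hm; omega

/-- Under hypotheses (P1)–(P10) on `a b : ℤ → ℕ`, suppose
`ν₊ = ν₋ + 2` and write `m = ν₋ + 1`.  Then `a ν₋ = a ν₊`, `a m = a ν₊ + 1`,
`a n = a ν₊ + (n - ν₊)` for `n ≥ ν₊`, and `a n = a ν₋ + (ν₋ - n)` for `n ≤ ν₋`
(so `a` is W-shaped).  Moreover: if `m` is even then `b m = a m - 2` and `b n = a n` for
every `n ≠ m`; if `m` is odd then `b (m-1) = a (m-1) + 2`, `b (m+1) = a (m+1) + 2`, and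
`b n = a n` for every `n ∉ {m - 1, m + 1}`. -/
theorem stmt7 (a b : ℤ → ℕ)
    (P1 : ∀ n : ℤ, Odd n → a n = b n)
    (P2 : ∀ n : ℤ, Even n → (b n : ℤ) - a n ∈ ({-2, 0, 2} : Set ℤ))
    (P3 : ∀ n : ℤ, Even n → b n ≠ a n → a (n - 1) = a (n + 1))
    (P4 : ∀ n : ℤ, |(a (n + 1) : ℤ) - b n| ≤ 1 ∧ |(b (n + 1) : ℤ) - a n| ≤ 1)
    (P5 : ∀ n : ℤ, Odd n → a n = b (n + 1) + 1 → a (n - 1) = a n + 1)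
    (P6 : ∀ n : ℤ, Odd n → a n = a (n + 1) + 1 → b (n - 1) = a n + 1)
    (P7 : ∀ n : ℤ, Even n → b n = a (n + 1) + 1 → a (n - 1) = a n + 1)
    (P8 : ∀ n : ℤ, Even n → a n = a (n + 1) + 1 → a (n - 1) = b n + 1)
    (P9 : ∃ Np Nm : ℤ, (∀ n : ℤ, Np ≤ n → a (n + 1) = a n + 1) ∧
        (∀ n : ℤ, n ≤ Nm → a (n - 1) = a n + 1))
    (P10 : ∀ n : ℤ, (a n : ℤ) ≡ n [ZMOD 2] ∧ (b n : ℤ) ≡ n [ZMOD 2])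
    (νp νm : ℤ)
    (hνp : IsLeast {n : ℤ | ∀ k : ℤ, n ≤ k → a (k + 1) = a k + 1} νp)
    (hνm : IsGreatest {n : ℤ | ∀ k : ℤ, k ≤ n → a (k - 1) = a k + 1} νm)
    (heq : νp = νm + 2) :
    a νm = a νp ∧
    a (νm + 1) = a νp + 1 ∧
    (∀ n : ℤ, νp ≤ n → a n = a νp + (n - νp).natAbs) ∧
    (∀ n : ℤ, n ≤ νm → a n = a νm + (νm - n).natAbs) ∧
    (Even (νm + 1) →
      b (νm + 1) + 2 = a (νm + 1) ∧ ∀ n : ℤ, n ≠ νm + 1 → b n = a n) ∧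
    (Odd (νm + 1) →
      b νm = a νm + 2 ∧ b (νm + 2) = a (νm + 2) + 2 ∧
      ∀ n : ℤ, n ≠ νm → n ≠ νm + 2 → b n = a n) :=
  stmt7_general a b P1 P3 P4 P5 P6 P8 P10 νp νm hνp hνm heq
end

section
/- Under hypotheses (P1)–(P10) of the given setting, suppose ν₊ > ν₋ + 2. Then for every even integer n with ν₋ ≤ n ≤ ν₊ one has a(n) = b(n) + 2 if ν₊ is odd and b(n) = a(n) + 2 if ν₊ is even, while a(n) = b(n) for every other integer n. Moreover a(n + 2) = a(n) for every n with ν₋ ≤ n ≤ ν₊ − 2, and a(ν₋ + 1) = a(ν₋) + 1 = a(ν₊) + 1 = a(ν₊ − 1) (so a is generalized W-shaped). -/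
/-!
Because `a` and `b` agree at odd places and have the parity of the index, (P4) forces every
step of `a` to be `±1`, and (P5)–(P8) show that a descent of `a` at `n` forces a descent at
`n - 2`. So ascents propagate forward and descents backward in steps of two. Since `a` ascends
at `ν₋` and descends at `ν₊ - 1`, it zigzags on `[ν₋, ν₊]`, which forces `ν₊ ≡ ν₋ (mod 2)`;
reading (P4)–(P8) at the even places then compares `a` with `b`.
-/

theorem Int.le_induction_by_two {P : ℤ → Prop} {m : ℤ} (base : P m)
    (step : ∀ n, m ≤ n → P n → P (n + 2)) {n : ℤ} (hmn : m ≤ n) (hev : Even (n - m)) : P n := by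
  obtain ⟨k, hk⟩ := hev
  lift k to ℕ using (by omega)
  obtain rfl : n = m + 2 * k := by omega
  clear hk hmn
  induction k with
  | zero => simpa using base
  | succ k ih => simpa [mul_add, ← add_assoc] using step _ (by omega) ih

theorem Int.le_induction_down_by_two {P : ℤ → Prop} {m : ℤ} (base : P m)
    (step : ∀ n, n ≤ m → P n → P (n - 2)) {n : ℤ} (hnm : n ≤ m) (hev : Even (m - n)) : P n := by
  obtain ⟨k, hk⟩ := hev
  lift k to ℕ using (by omega)
  obtain rfl : n = m - 2 * k := by omega
  clear hk hnm
  induction k with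
  | zero => simpa using base
  | succ k ih => simpa [mul_add, ← sub_sub] using step _ (by omega) ih

def AscendsAt (a : ℤ → ℕ) (n : ℤ) : Prop := a (n + 1) = a n + 1

def DescendsAt (a : ℤ → ℕ) (n : ℤ) : Prop := a n = a (n + 1) + 1

section Zigzag

variable {a : ℤ → ℕ} {m n νp νm : ℤ}

theorem AscendsAt.not_descendsAt (h : AscendsAt a n) : ¬ DescendsAt a n := by
  unfold AscendsAt DescendsAt at *
  omega

theorem AscendsAt.add_two (hstep : ∀ n, AscendsAt a n ∨ DescendsAt a n)
    (hdesc : ∀ n, DescendsAt a n → DescendsAt a (n - 2)) (h : AscendsAt a n) :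
    AscendsAt a (n + 2) :=
  (hstep (n + 2)).resolve_right fun hd => h.not_descendsAt (by simpa using hdesc _ hd)

theorem AscendsAt.of_le_of_even (hstep : ∀ n, AscendsAt a n ∨ DescendsAt a n)
    (hdesc : ∀ n, DescendsAt a n → DescendsAt a (n - 2)) (h : AscendsAt a m) (hmn : m ≤ n)
    (hev : Even (n - m)) : AscendsAt a n :=
  Int.le_induction_by_two h (fun _ _ hk => hk.add_two hstep hdesc) hmn hev

theorem DescendsAt.of_le_of_even (hdesc : ∀ n, DescendsAt a n → DescendsAt a (n - 2))
    (h : DescendsAt a m) (hnm : n ≤ m) (hev : Even (m - n)) : DescendsAt a n :=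
  Int.le_induction_down_by_two h (fun k _ => hdesc k) hnm hev

theorem ascendsAt_of_isGreatest (hstep : ∀ n, AscendsAt a n ∨ DescendsAt a n)
    (hνm : IsGreatest {n : ℤ | ∀ k : ℤ, k ≤ n → a (k - 1) = a k + 1} νm) : AscendsAt a νm := by
  refine (hstep νm).resolve_right fun hd => ?_
  have : νm + 1 ≤ νm := hνm.2 fun k hk => by
    rcases hk.lt_or_eq with hk | rfl
    · exact hνm.1 k (by omega)
    · rw [add_sub_cancel_right]; exact hd
  omega

theorem descendsAt_of_lt_of_isGreatest
    (hνm : IsGreatest {n : ℤ | ∀ k : ℤ, k ≤ n → a (k - 1) = a k + 1} νm) (hn : n < νm) :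
    DescendsAt a n := by
  simpa [DescendsAt] using hνm.1 (n + 1) (by omega)

theorem descendsAt_sub_one_of_isLeast (hstep : ∀ n, AscendsAt a n ∨ DescendsAt a n)
    (hνp : IsLeast {n : ℤ | ∀ k : ℤ, n ≤ k → a (k + 1) = a k + 1} νp) :
    DescendsAt a (νp - 1) := by
  refine (hstep (νp - 1)).resolve_left fun hu => ?_
  have : νp ≤ νp - 1 := hνp.2 fun k hk => by
    rcases hk.lt_or_eq with hk | rfl
    · exact hνp.1 k (by omega)
    · exact hu
  omega

theorem even_sub_of_isLeast_of_isGreatest (hstep : ∀ n, AscendsAt a n ∨ DescendsAt a n)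
    (hdesc : ∀ n, DescendsAt a n → DescendsAt a (n - 2))
    (hνp : IsLeast {n : ℤ | ∀ k : ℤ, n ≤ k → a (k + 1) = a k + 1} νp)
    (hνm : IsGreatest {n : ℤ | ∀ k : ℤ, k ≤ n → a (k - 1) = a k + 1} νm) (hlt : νm < νp) :
    Even (νp - νm) := by
  by_contra hodd
  have hev : Even (νp - 1 - νm) := Int.even_iff.mpr (by rw [Int.not_even_iff] at hodd; omega)
  have hup := (ascendsAt_of_isGreatest hstep hνm).of_le_of_even hstep hdesc (by omega) hev
  exact hup.not_descendsAt (descendsAt_sub_one_of_isLeast hstep hνp)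

theorem descendsAt_of_odd_sub (hstep : ∀ n, AscendsAt a n ∨ DescendsAt a n)
    (hdesc : ∀ n, DescendsAt a n → DescendsAt a (n - 2))
    (hνp : IsLeast {n : ℤ | ∀ k : ℤ, n ≤ k → a (k + 1) = a k + 1} νp)
    (hνm : IsGreatest {n : ℤ | ∀ k : ℤ, k ≤ n → a (k - 1) = a k + 1} νm) (hlt : νm < νp)
    (hn : n < νp) (hodd : Odd (n - νm)) : DescendsAt a n := by
  have hpar := Int.even_iff.mp (even_sub_of_isLeast_of_isGreatest hstep hdesc hνp hνm hlt)
  have := Int.odd_iff.mp hodd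
  exact (descendsAt_sub_one_of_isLeast hstep hνp).of_le_of_even hdesc (by omega)
    (Int.even_iff.mpr (by omega))

theorem apply_add_two_eq (hstep : ∀ n, AscendsAt a n ∨ DescendsAt a n)
    (hdesc : ∀ n, DescendsAt a n → DescendsAt a (n - 2))
    (hνp : IsLeast {n : ℤ | ∀ k : ℤ, n ≤ k → a (k + 1) = a k + 1} νp)
    (hνm : IsGreatest {n : ℤ | ∀ k : ℤ, k ≤ n → a (k - 1) = a k + 1} νm)
    (hn₁ : νm ≤ n) (hn₂ : n + 2 ≤ νp) : a (n + 2) = a n := by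
  have up {k : ℤ} : νm ≤ k → Even (k - νm) → AscendsAt a k :=
    (ascendsAt_of_isGreatest hstep hνm).of_le_of_even hstep hdesc
  have down {k : ℤ} : k < νp → Odd (k - νm) → DescendsAt a k :=
    descendsAt_of_odd_sub hstep hdesc hνp hνm (by omega)
  have hshift : n + 1 + 1 = n + 2 := by ring
  rcases Int.even_or_odd (n - νm) with hev | hodd
  · have h₁ : AscendsAt a n := up hn₁ hev
    have h₂ : DescendsAt a (n + 1) :=
      down (by omega) (by rw [add_sub_right_comm]; exact hev.add_one)
    simp only [AscendsAt, DescendsAt, hshift] at h₁ h₂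
    omega
  · have h₁ : DescendsAt a n := down (by omega) hodd
    have h₂ : AscendsAt a (n + 1) := up (by omega) (by rw [add_sub_right_comm]; exact hodd.add_one)
    simp only [AscendsAt, DescendsAt, hshift] at h₁ h₂
    omega

theorem apply_eq_of_isLeast_of_isGreatest (hstep : ∀ n, AscendsAt a n ∨ DescendsAt a n)
    (hdesc : ∀ n, DescendsAt a n → DescendsAt a (n - 2))
    (hνp : IsLeast {n : ℤ | ∀ k : ℤ, n ≤ k → a (k + 1) = a k + 1} νp)
    (hνm : IsGreatest {n : ℤ | ∀ k : ℤ, k ≤ n → a (k - 1) = a k + 1} νm) (hlt : νm < νp) :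
    a νp = a νm :=
  Int.le_induction_by_two (P := fun k => k ≤ νp → a k = a νm) (fun _ => rfl)
    (fun k hk ih hk₂ => (apply_add_two_eq hstep hdesc hνp hνm hk hk₂).trans (ih (by omega)))
    hlt.le (even_sub_of_isLeast_of_isGreatest hstep hdesc hνp hνm hlt) le_rfl

end Zigzag

section FloerSequences

variable {a b : ℤ → ℕ} {n νp νm : ℤ}

theorem ascendsAt_or_descendsAt (P1 : ∀ n : ℤ, Odd n → a n = b n)
    (P4 : ∀ n : ℤ, |(a (n + 1) : ℤ) - b n| ≤ 1 ∧ |(b (n + 1) : ℤ) - a n| ≤ 1)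
    (P10 : ∀ n : ℤ, (a n : ℤ) ≡ n [ZMOD 2] ∧ (b n : ℤ) ≡ n [ZMOD 2]) (n : ℤ) :
    AscendsAt a n ∨ DescendsAt a n := by
  have ha : ∀ k, (a k : ℤ) % 2 = k % 2 := fun k => (P10 k).1
  have hb : (b n : ℤ) % 2 = n % 2 := (P10 n).2
  have h₁ := abs_le.mp (P4 n).1
  have h₂ := abs_le.mp (P4 n).2
  have := ha n
  have := ha (n + 1)
  unfold AscendsAt DescendsAt
  rcases Int.even_or_odd n with hn | hn
  · have := P1 (n + 1) hn.add_one
    omega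
  · have := P1 n hn
    omega

theorem descendsAt_sub_two
    (P5 : ∀ n : ℤ, Odd n → a n = b (n + 1) + 1 → a (n - 1) = a n + 1)
    (P6 : ∀ n : ℤ, Odd n → a n = a (n + 1) + 1 → b (n - 1) = a n + 1)
    (P7 : ∀ n : ℤ, Even n → b n = a (n + 1) + 1 → a (n - 1) = a n + 1)
    (P8 : ∀ n : ℤ, Even n → a n = a (n + 1) + 1 → a (n - 1) = b n + 1)
    (h : DescendsAt a n) : DescendsAt a (n - 2) := by
  unfold DescendsAt at *
  rw [show n - 2 + 1 = n - 1 by ring, show n - 2 = n - 1 - 1 by ring]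
  rcases Int.even_or_odd n with hn | hn
  · apply P5 (n - 1) (hn.sub_odd odd_one)
    rw [sub_add_cancel]
    exact P8 n hn h
  · apply P7 (n - 1) (hn.sub_odd odd_one)
    rw [sub_add_cancel]
    exact P6 n hn h

theorem eq_add_two_of_ascendsAt_sub_one_of_descendsAt
    (P8 : ∀ n : ℤ, Even n → a n = a (n + 1) + 1 → a (n - 1) = b n + 1)
    (hn : Even n) (hup : AscendsAt a (n - 1)) (hdown : DescendsAt a n) : a n = b n + 2 := by
  have := P8 n hn hdown
  unfold AscendsAt at hup
  rw [sub_add_cancel] at hup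
  omega

theorem eq_of_descendsAt_sub_one_of_descendsAt
    (P8 : ∀ n : ℤ, Even n → a n = a (n + 1) + 1 → a (n - 1) = b n + 1)
    (hn : Even n) (hdown₁ : DescendsAt a (n - 1)) (hdown₂ : DescendsAt a n) : a n = b n := by
  have := P8 n hn hdown₂
  unfold DescendsAt at hdown₁
  rw [sub_add_cancel] at hdown₁
  omega

theorem eq_of_ascendsAt_sub_one_of_ascendsAt
    (P4 : ∀ n : ℤ, |(a (n + 1) : ℤ) - b n| ≤ 1 ∧ |(b (n + 1) : ℤ) - a n| ≤ 1)
    (P7 : ∀ n : ℤ, Even n → b n = a (n + 1) + 1 → a (n - 1) = a n + 1)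
    (P10 : ∀ n : ℤ, (a n : ℤ) ≡ n [ZMOD 2] ∧ (b n : ℤ) ≡ n [ZMOD 2])
    (hn : Even n) (hup₁ : AscendsAt a (n - 1)) (hup₂ : AscendsAt a n) : a n = b n := by
  have ha : (a (n + 1) : ℤ) % 2 = (n + 1) % 2 := (P10 (n + 1)).1
  have hb : (b n : ℤ) % 2 = n % 2 := (P10 n).2
  have h₄ := abs_le.mp (P4 n).1
  have h₇ := mt (P7 n hn)
  unfold AscendsAt at hup₁ hup₂
  rw [sub_add_cancel] at hup₁
  omega

theorem add_two_eq_of_ascendsAt_of_descendsAt_add_one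
    (P6 : ∀ n : ℤ, Odd n → a n = a (n + 1) + 1 → b (n - 1) = a n + 1)
    (hn : Even n) (hup : AscendsAt a n) (hdown : DescendsAt a (n + 1)) : b n = a n + 2 := by
  have := P6 (n + 1) hn.add_one hdown
  rw [add_sub_cancel_right] at this
  unfold AscendsAt at hup
  omega

theorem add_two_eq_of_ascendsAt_sub_two_of_descendsAt_sub_one
    (P4 : ∀ n : ℤ, |(a (n + 1) : ℤ) - b n| ≤ 1 ∧ |(b (n + 1) : ℤ) - a n| ≤ 1)
    (P5 : ∀ n : ℤ, Odd n → a n = b (n + 1) + 1 → a (n - 1) = a n + 1)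
    (P10 : ∀ n : ℤ, (a n : ℤ) ≡ n [ZMOD 2] ∧ (b n : ℤ) ≡ n [ZMOD 2])
    (hn : Even n) (hup : AscendsAt a (n - 2)) (hdown : DescendsAt a (n - 1)) :
    b n = a n + 2 := by
  have ha : (a (n - 1) : ℤ) % 2 = (n - 1) % 2 := (P10 (n - 1)).1
  have hb : (b n : ℤ) % 2 = n % 2 := (P10 n).2
  have h₄ := abs_le.mp (P4 (n - 1)).2
  have h₅ := mt (P5 (n - 1) (hn.sub_odd odd_one))
  unfold AscendsAt DescendsAt at *
  rw [show n - 2 + 1 = n - 1 by ring, show n - 2 = n - 1 - 1 by ring] at hup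
  rw [sub_add_cancel] at h₄ h₅ hdown
  omega

theorem eq_of_not_even_mem_Icc (P1 : ∀ n : ℤ, Odd n → a n = b n)
    (P4 : ∀ n : ℤ, |(a (n + 1) : ℤ) - b n| ≤ 1 ∧ |(b (n + 1) : ℤ) - a n| ≤ 1)
    (P7 : ∀ n : ℤ, Even n → b n = a (n + 1) + 1 → a (n - 1) = a n + 1)
    (P8 : ∀ n : ℤ, Even n → a n = a (n + 1) + 1 → a (n - 1) = b n + 1)
    (P10 : ∀ n : ℤ, (a n : ℤ) ≡ n [ZMOD 2] ∧ (b n : ℤ) ≡ n [ZMOD 2])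
    (hνp : IsLeast {n : ℤ | ∀ k : ℤ, n ≤ k → a (k + 1) = a k + 1} νp)
    (hνm : IsGreatest {n : ℤ | ∀ k : ℤ, k ≤ n → a (k - 1) = a k + 1} νm)
    (n : ℤ) (hn : ¬ (Even n ∧ νm ≤ n ∧ n ≤ νp)) : a n = b n := by
  rcases Int.even_or_odd n with hev | hodd
  · have hout : n < νm ∨ νp < n := by
      by_contra! h
      exact hn ⟨hev, h⟩
    rcases hout with h | h
    · exact eq_of_descendsAt_sub_one_of_descendsAt P8 hev
        (descendsAt_of_lt_of_isGreatest hνm (by omega)) (descendsAt_of_lt_of_isGreatest hνm h)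
    · exact eq_of_ascendsAt_sub_one_of_ascendsAt P4 P7 P10 hev (hνp.1 _ (by omega)) (hνp.1 _ h.le)
  · exact P1 n hodd

end FloerSequences

theorem stmt8_general (a b : ℤ → ℕ)
    (P1 : ∀ n : ℤ, Odd n → a n = b n)
    (P4 : ∀ n : ℤ, |(a (n + 1) : ℤ) - b n| ≤ 1 ∧ |(b (n + 1) : ℤ) - a n| ≤ 1)
    (P5 : ∀ n : ℤ, Odd n → a n = b (n + 1) + 1 → a (n - 1) = a n + 1)
    (P6 : ∀ n : ℤ, Odd n → a n = a (n + 1) + 1 → b (n - 1) = a n + 1)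
    (P7 : ∀ n : ℤ, Even n → b n = a (n + 1) + 1 → a (n - 1) = a n + 1)
    (P8 : ∀ n : ℤ, Even n → a n = a (n + 1) + 1 → a (n - 1) = b n + 1)
    (P10 : ∀ n : ℤ, (a n : ℤ) ≡ n [ZMOD 2] ∧ (b n : ℤ) ≡ n [ZMOD 2])
    (νp νm : ℤ)
    (hνp : IsLeast {n : ℤ | ∀ k : ℤ, n ≤ k → a (k + 1) = a k + 1} νp)
    (hνm : IsGreatest {n : ℤ | ∀ k : ℤ, k ≤ n → a (k - 1) = a k + 1} νm)
    (hgt : νm + 2 < νp) :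
    (∀ n : ℤ, Even n → νm ≤ n → n ≤ νp →
      (Odd νp → a n = b n + 2) ∧ (Even νp → b n = a n + 2)) ∧
    (∀ n : ℤ, ¬ (Even n ∧ νm ≤ n ∧ n ≤ νp) → a n = b n) ∧
    (∀ n : ℤ, νm ≤ n → n ≤ νp - 2 → a (n + 2) = a n) ∧
    a (νm + 1) = a νm + 1 ∧ a νm = a νp ∧ a (νp - 1) = a νp + 1 := by
  have hstep := ascendsAt_or_descendsAt P1 P4 P10
  have hdesc (n : ℤ) := descendsAt_sub_two (n := n) P5 P6 P7 P8
  have hlt : νm < νp := by omega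
  have hpar := Int.even_iff.mp (even_sub_of_isLeast_of_isGreatest hstep hdesc hνp hνm hlt)
  have up {k : ℤ} (hk : νm ≤ k) (hev : k % 2 = νm % 2) : AscendsAt a k :=
    (ascendsAt_of_isGreatest hstep hνm).of_le_of_even hstep hdesc hk (Int.even_iff.mpr (by omega))
  have down {k : ℤ} (hk : k < νp) (hodd : k % 2 ≠ νm % 2) : DescendsAt a k :=
    descendsAt_of_odd_sub hstep hdesc hνp hνm hlt hk (Int.odd_iff.mpr (by omega))
  refine ⟨fun n hn hn₁ hn₂ => ⟨fun hodd => ?_, fun hev => ?_⟩,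
    eq_of_not_even_mem_Icc P1 P4 P7 P8 P10 hνp hνm,
    fun n hn₁ hn₂ => apply_add_two_eq hstep hdesc hνp hνm hn₁ (by omega),
    ascendsAt_of_isGreatest hstep hνm,
    (apply_eq_of_isLeast_of_isGreatest hstep hdesc hνp hνm hlt).symm,
    by simpa [DescendsAt] using descendsAt_sub_one_of_isLeast hstep hνp⟩
  · have := Int.even_iff.mp hn
    have := Int.odd_iff.mp hodd
    exact eq_add_two_of_ascendsAt_sub_one_of_descendsAt P8 hn (up (by omega) (by omega))
      (down (by omega) (by omega))
  · have := Int.even_iff.mp hn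
    have := Int.even_iff.mp hev
    rcases hn₂.lt_or_eq with hn₂ | rfl
    · exact add_two_eq_of_ascendsAt_of_descendsAt_add_one P6 hn (up hn₁ (by omega))
        (down (by omega) (by omega))
    -- at `n = ν₊` there is no descent at `n + 1`; the peak at `ν₊ - 1` is used instead
    · exact add_two_eq_of_ascendsAt_sub_two_of_descendsAt_sub_one P4 P5 P10 hn
        (up (by omega) (by omega)) (down (by omega) (by omega))

/-- Under hypotheses (P1)–(P10) on `a b : ℤ → ℕ`, suppose
`ν₊ > ν₋ + 2`.  Then for every even integer `n` with `ν₋ ≤ n ≤ ν₊` one has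
`a n = b n + 2` if `ν₊` is odd and `b n = a n + 2` if `ν₊` is even, while `a n = b n`
for every other integer `n`.  Moreover `a (n + 2) = a n` for every `n` with
`ν₋ ≤ n ≤ ν₊ - 2`, and `a (ν₋ + 1) = a ν₋ + 1 = a ν₊ + 1 = a (ν₊ - 1)` (so `a` is
generalized W-shaped). -/
theorem stmt8 (a b : ℤ → ℕ)
    (P1 : ∀ n : ℤ, Odd n → a n = b n)
    (P2 : ∀ n : ℤ, Even n → (b n : ℤ) - a n ∈ ({-2, 0, 2} : Set ℤ))
    (P3 : ∀ n : ℤ, Even n → b n ≠ a n → a (n - 1) = a (n + 1))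
    (P4 : ∀ n : ℤ, |(a (n + 1) : ℤ) - b n| ≤ 1 ∧ |(b (n + 1) : ℤ) - a n| ≤ 1)
    (P5 : ∀ n : ℤ, Odd n → a n = b (n + 1) + 1 → a (n - 1) = a n + 1)
    (P6 : ∀ n : ℤ, Odd n → a n = a (n + 1) + 1 → b (n - 1) = a n + 1)
    (P7 : ∀ n : ℤ, Even n → b n = a (n + 1) + 1 → a (n - 1) = a n + 1)
    (P8 : ∀ n : ℤ, Even n → a n = a (n + 1) + 1 → a (n - 1) = b n + 1)
    (P9 : ∃ Np Nm : ℤ, (∀ n : ℤ, Np ≤ n → a (n + 1) = a n + 1) ∧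
        (∀ n : ℤ, n ≤ Nm → a (n - 1) = a n + 1))
    (P10 : ∀ n : ℤ, (a n : ℤ) ≡ n [ZMOD 2] ∧ (b n : ℤ) ≡ n [ZMOD 2])
    (νp νm : ℤ)
    (hνp : IsLeast {n : ℤ | ∀ k : ℤ, n ≤ k → a (k + 1) = a k + 1} νp)
    (hνm : IsGreatest {n : ℤ | ∀ k : ℤ, k ≤ n → a (k - 1) = a k + 1} νm)
    (hgt : νm + 2 < νp) :
    (∀ n : ℤ, Even n → νm ≤ n → n ≤ νp →
      (Odd νp → a n = b n + 2) ∧ (Even νp → b n = a n + 2)) ∧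
    (∀ n : ℤ, ¬ (Even n ∧ νm ≤ n ∧ n ≤ νp) → a n = b n) ∧
    (∀ n : ℤ, νm ≤ n → n ≤ νp - 2 → a (n + 2) = a n) ∧
    a (νm + 1) = a νm + 1 ∧ a νm = a νp ∧ a (νp - 1) = a νp + 1 :=
  stmt8_general a b P1 P4 P5 P6 P7 P8 P10 νp νm hνp hνm hgt
end

section
/- Let ν ∈ ℤ, C ∈ ℕ, and let s, a, g, h : ℤ → ℕ be sequences such that: (i) s(n) = C + |n − ν| for every n; (ii) a(n) ≥ s(n) for every n; (iii) a(n+1) ≤ a(n) + 1 for every n; (iv) h(n+1) ≤ a(n) + a(n+1) for every n; (v) h(n) ≥ 2·g(n) − 1 for every n ≥ 1; (vi) g(n) ≥ s(n) for every n ≥ 1. If there exists an integer n₀ with n₀ ≥ ν, n₀ ≥ 0, and a(n₀) = s(n₀), then a(n₀ + 1) = s(n₀ + 1) and g(n₀ + 1) = s(n₀ + 1). -/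
/-! For `n₀ ≥ ν` the V-shaped `s` rises by exactly one at `n₀`, so the slope bound (iii) keeps `a`
on `s` at `n₀ + 1`. Then (iv) and (v) give `2 g (n₀ + 1) ≤ a n₀ + a (n₀ + 1) + 1 = 2 s (n₀ + 1)`,
the reverse of (vi). -/

/-- Let `ν : ℤ`, `C : ℕ`, and `s a g h : ℤ → ℕ` with:
(i) `s n = C + |n - ν|`; (ii) `a n ≥ s n`; (iii) `a (n+1) ≤ a n + 1`;
(iv) `h (n+1) ≤ a n + a (n+1)`; (v) `h n ≥ 2 * g n - 1` for `n ≥ 1`;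
(vi) `g n ≥ s n` for `n ≥ 1`.  If there is an integer `n₀` with `n₀ ≥ ν`, `n₀ ≥ 0`, and
`a n₀ = s n₀`, then `a (n₀ + 1) = s (n₀ + 1)` and `g (n₀ + 1) = s (n₀ + 1)`. -/
theorem stmt9 (ν : ℤ) (C : ℕ) (s a g h : ℤ → ℕ)
    (hi : ∀ n : ℤ, s n = C + (n - ν).natAbs)
    (hii : ∀ n : ℤ, s n ≤ a n)
    (hiii : ∀ n : ℤ, a (n + 1) ≤ a n + 1)
    (hiv : ∀ n : ℤ, h (n + 1) ≤ a n + a (n + 1))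
    (hv : ∀ n : ℤ, 1 ≤ n → 2 * g n ≤ h n + 1)
    (hvi : ∀ n : ℤ, 1 ≤ n → s n ≤ g n)
    (n₀ : ℤ) (hn₀ν : ν ≤ n₀) (hn₀0 : 0 ≤ n₀) (hn₀ : a n₀ = s n₀) :
    a (n₀ + 1) = s (n₀ + 1) ∧ g (n₀ + 1) = s (n₀ + 1) := by
  have hpos : (1 : ℤ) ≤ n₀ + 1 := by omega
  have hs_succ : s (n₀ + 1) = s n₀ + 1 := by rw [hi, hi]; omega
  have ha_succ : a (n₀ + 1) = s (n₀ + 1) :=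
    le_antisymm (by have := hiii n₀; omega) (hii (n₀ + 1))
  refine ⟨ha_succ, le_antisymm ?_ (hvi (n₀ + 1) hpos)⟩
  have : 2 * g (n₀ + 1) ≤ 2 * s (n₀ + 1) :=
    calc 2 * g (n₀ + 1) ≤ h (n₀ + 1) + 1 := hv (n₀ + 1) hpos
      _ ≤ a n₀ + a (n₀ + 1) + 1 := Nat.add_le_add_right (hiv n₀) 1
      _ = 2 * s (n₀ + 1) := by omega
  omega
end

section
/- Let ν ∈ ℤ with ν ≥ 1, let C ∈ ℕ, and let s, a, h : ℤ → ℕ be sequences such that: (i) s(n) = C + |n − ν| for every n; (ii) a(n) ≥ s(n) for every n; (iii) a(n) ≤ a(n+1) + 1 for every n; (iv) h(n+1) ≤ a(n) + a(n+1) for every n; (v) h(1) ≥ 2·s(1) + 3. Then there is no integer n with 1 ≤ n ≤ ν and a(n) = s(n). -/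
/-!
If `a` met the V-shaped lower bound `s` somewhere on the descending branch `1 ≤ n ≤ ν`, then,
since `a` drops by at most one per step while `s` drops by exactly one there, `a` would also
meet `s` at every point to the left of `n`, in particular at `0` and `1`. But then
`h 1 ≤ a 0 + a 1 = s 0 + s 1 = 2 * s 1 + 1`, contradicting `2 * s 1 + 3 ≤ h 1`.
-/

theorem Int.le_add_sub_of_forall_le_succ_add_one {f : ℤ → ℕ} (hf : ∀ n, f n ≤ f (n + 1) + 1)
    {m n : ℤ} (hmn : m ≤ n) : (f m : ℤ) ≤ f n + (n - m) := by
  induction n, hmn using Int.leInduction with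
  | base => simp
  | succ n _ ih =>
    have := hf n
    omega

theorem Int.eq_of_le_of_eq_of_forall_le_succ_add_one {s a : ℤ → ℕ} (hsa : ∀ n, s n ≤ a n)
    (ha : ∀ n, a n ≤ a (n + 1) + 1) {m n : ℤ} (hmn : m ≤ n)
    (hs : (s m : ℤ) = s n + (n - m)) (hn : a n = s n) : a m = s m := by
  have := Int.le_add_sub_of_forall_le_succ_add_one ha hmn
  have := hsa m
  omega

theorem stmt10_general (ν : ℤ) (C : ℕ) (s a h : ℤ → ℕ)
    (hi : ∀ n : ℤ, s n = C + (n - ν).natAbs)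
    (hii : ∀ n : ℤ, s n ≤ a n)
    (hiii : ∀ n : ℤ, a n ≤ a (n + 1) + 1)
    (hiv : ∀ n : ℤ, h (n + 1) ≤ a n + a (n + 1))
    (hv : 2 * s 1 + 3 ≤ h 1) :
    ¬ ∃ n : ℤ, 1 ≤ n ∧ n ≤ ν ∧ a n = s n := by
  rintro ⟨n, hn1, hnν, hans⟩
  have hs0 : (s 0 : ℤ) = s n + (n - 0) := by simp only [hi]; omega
  have hs1 : (s 1 : ℤ) = s n + (n - 1) := by simp only [hi]; omega
  have ha0 := Int.eq_of_le_of_eq_of_forall_le_succ_add_one hii hiii (by omega) hs0 hans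
  have ha1 := Int.eq_of_le_of_eq_of_forall_le_succ_add_one hii hiii hn1 hs1 hans
  have hh1 : h 1 ≤ a 0 + a 1 := hiv 0
  omega

/-- Let `ν : ℤ` with `ν ≥ 1`, `C : ℕ`, and `s a h : ℤ → ℕ` with:
(i) `s n = C + |n - ν|`; (ii) `a n ≥ s n`; (iii) `a n ≤ a (n+1) + 1`;
(iv) `h (n+1) ≤ a n + a (n+1)`; (v) `h 1 ≥ 2 * s 1 + 3`.  Then there is no integer `n`
with `1 ≤ n ≤ ν` and `a n = s n`. -/
theorem stmt10 (ν : ℤ) (hν : 1 ≤ ν) (C : ℕ) (s a h : ℤ → ℕ)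
    (hi : ∀ n : ℤ, s n = C + (n - ν).natAbs)
    (hii : ∀ n : ℤ, s n ≤ a n)
    (hiii : ∀ n : ℤ, a n ≤ a (n + 1) + 1)
    (hiv : ∀ n : ℤ, h (n + 1) ≤ a n + a (n + 1))
    (hv : 2 * s 1 + 3 ≤ h 1) :
    ¬ ∃ n : ℤ, 1 ≤ n ∧ n ≤ ν ∧ a n = s n :=
  stmt10_general ν C s a h hi hii hiii hiv hv
end
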